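/- The function x ↦ 1 − (Γ(1 + 1/x))^x is strictly increasing for x ≥ 1, and (Γ(1 + 1/d))^d → e^{−γ} as d → ∞, where γ is the Euler–Mascheroni constant. -/

import Mathlib

open Real

lemma strictConvexOn_log_Gamma' : StrictConvexOn ℝ (Set.Ioi 0) (log ∘ Real.Gamma) := by
  have h1 : ConvexOn ℝ (Set.Ioi (0:ℝ)) (fun x => log (Real.Gamma (x + 1))) := by
    constructor
    · exact convex_Ioi 0
    · intro x hx y hy a b ha hb hab
      have hx' : (0:ℝ) < x := hx
      have hy' : (0:ℝ) < y := hy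
      have key := Real.convexOn_log_Gamma.2 (x := x + 1) (y := y + 1)
        (Set.mem_Ioi.mpr (by linarith)) (Set.mem_Ioi.mpr (by linarith)) ha hb hab
      have : a • (x + 1) + b • (y + 1) = a • x + b • y + 1 := by
        simp only [smul_eq_mul]; nlinarith
      rw [this] at key
      simpa using key
  have h2 : StrictConvexOn ℝ (Set.Ioi (0:ℝ)) (fun x => -log x) :=
    strictConcaveOn_log_Ioi.neg
  have h3 := h1.add_strictConvexOn h2
  constructor
  · exact convex_Ioi 0
  · intro x hx y hy hxy a b ha hb hab
    have hmem : a • x + b • y ∈ Set.Ioi (0:ℝ) := (convex_Ioi 0) hx hy ha.le hb.le hab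
    have key := h3.2 hx hy hxy ha hb hab
    have heq : ∀ z : ℝ, z ∈ Set.Ioi (0:ℝ) →
        log (Real.Gamma (z + 1)) + -log z = (log ∘ Real.Gamma) z := by
      intro z hz
      have hz' : (0:ℝ) < z := hz
      have hg : Real.Gamma (z + 1) = z * Real.Gamma z := Real.Gamma_add_one hz'.ne'
      simp only [Function.comp_apply, hg,
        Real.log_mul hz'.ne' (Real.Gamma_pos_of_pos hz').ne']
      ring
    simp only [Pi.add_apply] at key
    rw [heq x hx, heq y hy, heq _ hmem] at key
    exact key

/-- `x ↦ 1 − (Γ(1 + 1/x))^x` is strictly increasing on `[1, ∞)`, and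
`(Γ(1 + 1/d))^d → e^{−γ}` as `d → ∞`. -/
theorem gamma_pow_mono_and_limit :
    StrictMonoOn (fun x : ℝ => 1 - Real.Gamma (1 + 1 / x) ^ x) (Set.Ici 1) ∧
    Filter.Tendsto (fun d : ℕ => Real.Gamma (1 + 1 / (d : ℝ)) ^ (d : ℝ))
      Filter.atTop (nhds (Real.exp (- Real.eulerMascheroniConstant))) := by
  have hF := strictConvexOn_log_Gamma'
  constructor
  · intro x hx y hy hxy
    simp only [Set.mem_Ici] at hx hy
    have hx0 : (0:ℝ) < x := lt_of_lt_of_le one_pos hx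
    have hy0 : (0:ℝ) < y := lt_of_lt_of_le one_pos hy
    have hxinv : (0:ℝ) < 1 / x := by positivity
    have hyinv : (0:ℝ) < 1 / y := by positivity
    have hinv : 1 / y < 1 / x := by
      apply one_div_lt_one_div_of_lt hx0 hxy
    -- secant slopes from the point 1
    have key := hF.secant_strict_mono (a := 1) (x := 1 + 1/y) (y := 1 + 1/x)
      (by norm_num) (by simp; positivity) (by simp; positivity)
      (by intro h; nlinarith) (by intro h; nlinarith) (by linarith)
    have hG1 : (log ∘ Real.Gamma) 1 = 0 := by
      simp [Real.Gamma_one]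
    rw [hG1] at key
    have e1 : (1 + 1/y - 1 : ℝ) = 1/y := by ring
    have e2 : (1 + 1/x - 1 : ℝ) = 1/x := by ring
    rw [e1, e2] at key
    have key2 : y * log (Real.Gamma (1 + 1/y)) < x * log (Real.Gamma (1 + 1/x)) := by
      have h1 : ((log ∘ Real.Gamma) (1 + 1/y) - 0) / (1/y)
          = y * log (Real.Gamma (1 + 1/y)) := by
        field_simp; simp
      have h2 : ((log ∘ Real.Gamma) (1 + 1/x) - 0) / (1/x)
          = x * log (Real.Gamma (1 + 1/x)) := by
        field_simp; simp
      rw [h1, h2] at key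
      exact key
    have hgy : (0:ℝ) < Real.Gamma (1 + 1/y) := Real.Gamma_pos_of_pos (by positivity)
    have hgx : (0:ℝ) < Real.Gamma (1 + 1/x) := Real.Gamma_pos_of_pos (by positivity)
    have hry : Real.Gamma (1 + 1/y) ^ y = exp (y * log (Real.Gamma (1 + 1/y))) := by
      rw [Real.rpow_def_of_pos hgy]; ring_nf
    have hrx : Real.Gamma (1 + 1/x) ^ x = exp (x * log (Real.Gamma (1 + 1/x))) := by
      rw [Real.rpow_def_of_pos hgx]; ring_nf
    simp only [hry, hrx]
    have := Real.exp_lt_exp.mpr key2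
    linarith
  · -- limit
    have hd : HasDerivAt (log ∘ Real.Gamma) (-Real.eulerMascheroniConstant) 1 := by
      have h := Real.hasDerivAt_Gamma_one.log (by simp [Real.Gamma_one])
      simpa [Real.Gamma_one, Function.comp_def] using h
    rw [hasDerivAt_iff_tendsto_slope] at hd
    have htend : Filter.Tendsto (fun d : ℕ => (1 + 1 / (d:ℝ)))
        Filter.atTop (nhdsWithin 1 {(1:ℝ)}ᶜ) := by
      rw [tendsto_nhdsWithin_iff]
      constructor
      · have h0 : Filter.Tendsto (fun d : ℕ => 1 / (d:ℝ)) Filter.atTop (nhds 0) :=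
          tendsto_one_div_atTop_nhds_zero_nat
        have hc : Filter.Tendsto (fun _ : ℕ => (1:ℝ)) Filter.atTop (nhds 1) :=
          tendsto_const_nhds
        simpa using hc.add h0
      · filter_upwards [Filter.eventually_gt_atTop 0] with d hd
        have : (0:ℝ) < 1 / (d:ℝ) := by positivity
        simp only [Set.mem_compl_iff, Set.mem_singleton_iff]
        intro h
        nlinarith
    have hslope := hd.comp htend
    have hexp := (Real.continuous_exp.tendsto _).comp hslope
    apply hexp.congr'
    filter_upwards [Filter.eventually_gt_atTop 0] with d hd
    have hdpos : (0:ℝ) < (d:ℝ) := by exact_mod_cast hd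
    have hg : (0:ℝ) < Real.Gamma (1 + 1/(d:ℝ)) := Real.Gamma_pos_of_pos (by positivity)
    simp only [Function.comp_apply, slope_def_field, Real.Gamma_one,
      Function.comp_apply]
    rw [Real.rpow_def_of_pos hg]
    congr 1
    rw [Real.log_one]
    have hne : (d:ℝ) ≠ 0 := hdpos.ne'
    field_simp
    ring
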